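/- arXiv:2406.10077 — 3 statements merged into one kernel-verified Lean document; each statement's English description precedes it below -/
import Mathlib

section
/- The 5-dimensional Lie algebra L_{5,5} over the finite field F_q (q ≥ 2), with basis {a_1, a_2, a_3, a_4, z} and only nonzero brackets [a_1,a_2] = a_3, [a_1,a_3] = z and [a_2,a_4] = z, satisfies d(L_{5,5}) = (q³+q²-1)/q⁵. -/
/-- Commutativity degree of a (finite) Lie ring. -/
noncomputable def commDeg (L : Type*) [LieRing L] : ℚ :=
  (Nat.card {p : L × L // ⁅p.1, p.2⁆ = 0} : ℚ) / (Nat.card L : ℚ) ^ 2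

/-! ### The Lie algebra `L_{5,5}` -/

/-- The 5-dimensional Lie algebra `L_{5,5}` with basis `a₁, a₂, a₃, a₄, z` and only nonzero
brackets `⁅a₁, a₂⁆ = a₃`, `⁅a₁, a₃⁆ = z`, `⁅a₂, a₄⁆ = z`; coordinates are with respect to
this basis. -/
def L55 (F : Type*) : Type _ := F × F × F × F × F

namespace L55
variable {F : Type*} [Field F]

instance : AddCommGroup (L55 F) := inferInstanceAs (AddCommGroup (F × F × F × F × F))
instance : Module F (L55 F) := inferInstanceAs (Module F (F × F × F × F × F))

/-- The bracket of `L_{5,5}`. -/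
def br (a b : L55 F) : L55 F :=
  (0, 0, a.1 * b.2.1 - b.1 * a.2.1, 0,
    (a.1 * b.2.2.1 - b.1 * a.2.2.1) + (a.2.1 * b.2.2.2.1 - b.2.1 * a.2.2.2.1))

instance : LieRing (L55 F) where
  bracket := br
  add_lie x y z := by
    show (((0 : F), (0 : F), (x.1 + y.1) * z.2.1 - z.1 * (x.2.1 + y.2.1), (0 : F),
        ((x.1 + y.1) * z.2.2.1 - z.1 * (x.2.2.1 + y.2.2.1)) +
          ((x.2.1 + y.2.1) * z.2.2.2.1 - z.2.1 * (x.2.2.2.1 + y.2.2.2.1))) :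
          F × F × F × F × F) =
      ((0 : F) + 0, (0 : F) + 0, (x.1 * z.2.1 - z.1 * x.2.1) + (y.1 * z.2.1 - z.1 * y.2.1),
        (0 : F) + 0,
        ((x.1 * z.2.2.1 - z.1 * x.2.2.1) + (x.2.1 * z.2.2.2.1 - z.2.1 * x.2.2.2.1)) +
          ((y.1 * z.2.2.1 - z.1 * y.2.2.1) + (y.2.1 * z.2.2.2.1 - z.2.1 * y.2.2.2.1)))
    exact Prod.ext (by simp) (Prod.ext (by simp) (Prod.ext (by ring)
      (Prod.ext (by simp) (by ring))))
  lie_add x y z := by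
    show (((0 : F), (0 : F), x.1 * (y.2.1 + z.2.1) - (y.1 + z.1) * x.2.1, (0 : F),
        (x.1 * (y.2.2.1 + z.2.2.1) - (y.1 + z.1) * x.2.2.1) +
          (x.2.1 * (y.2.2.2.1 + z.2.2.2.1) - (y.2.1 + z.2.1) * x.2.2.2.1)) :
          F × F × F × F × F) =
      ((0 : F) + 0, (0 : F) + 0, (x.1 * y.2.1 - y.1 * x.2.1) + (x.1 * z.2.1 - z.1 * x.2.1),
        (0 : F) + 0,
        ((x.1 * y.2.2.1 - y.1 * x.2.2.1) + (x.2.1 * y.2.2.2.1 - y.2.1 * x.2.2.2.1)) +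
          ((x.1 * z.2.2.1 - z.1 * x.2.2.1) + (x.2.1 * z.2.2.2.1 - z.2.1 * x.2.2.2.1)))
    exact Prod.ext (by simp) (Prod.ext (by simp) (Prod.ext (by ring)
      (Prod.ext (by simp) (by ring))))
  lie_self x := by
    show (((0 : F), (0 : F), x.1 * x.2.1 - x.1 * x.2.1, (0 : F),
        (x.1 * x.2.2.1 - x.1 * x.2.2.1) + (x.2.1 * x.2.2.2.1 - x.2.1 * x.2.2.2.1)) :
          F × F × F × F × F) = ((0 : F), (0 : F), (0 : F), (0 : F), (0 : F))
    exact Prod.ext rfl (Prod.ext rfl (Prod.ext (by ring) (Prod.ext rfl (by ring))))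
  leibniz_lie x y z := by
    show (((0 : F), (0 : F), x.1 * (0 : F) - (0 : F) * x.2.1, (0 : F),
        (x.1 * (y.1 * z.2.1 - z.1 * y.2.1) - (0 : F) * x.2.2.1) +
          (x.2.1 * (0 : F) - (0 : F) * x.2.2.2.1)) : F × F × F × F × F) =
      ((0 : F) + 0, (0 : F) + 0,
        ((0 : F) * z.2.1 - z.1 * (0 : F)) + (y.1 * (0 : F) - (0 : F) * y.2.1), (0 : F) + 0,
        (((0 : F) * z.2.2.1 - z.1 * (x.1 * y.2.1 - y.1 * x.2.1)) +
            ((0 : F) * z.2.2.2.1 - z.2.1 * (0 : F))) +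
          ((y.1 * (x.1 * z.2.1 - z.1 * x.2.1) - (0 : F) * y.2.2.1) +
            (y.2.1 * (0 : F) - (0 : F) * y.2.2.2.1)))
    exact Prod.ext (by simp) (Prod.ext (by simp) (Prod.ext (by ring)
      (Prod.ext (by simp) (by ring))))

instance : LieAlgebra F (L55 F) :=
  { (inferInstanceAs (Module F (L55 F)) : Module F (L55 F)) with
    lie_smul := fun t x y => by
      show (((0 : F), (0 : F), x.1 * (t * y.2.1) - t * y.1 * x.2.1, (0 : F),
          (x.1 * (t * y.2.2.1) - t * y.1 * x.2.2.1) +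
            (x.2.1 * (t * y.2.2.2.1) - t * y.2.1 * x.2.2.2.1)) : F × F × F × F × F) =
        (t * 0, t * 0, t * (x.1 * y.2.1 - y.1 * x.2.1), t * 0,
          t * ((x.1 * y.2.2.1 - y.1 * x.2.2.1) + (x.2.1 * y.2.2.2.1 - y.2.1 * x.2.2.2.1)))
      exact Prod.ext (by simp) (Prod.ext (by simp) (Prod.ext (by ring)
        (Prod.ext (by simp) (by ring)))) }

instance [Fintype F] : Fintype (L55 F) := inferInstanceAs (Fintype (F × F × F × F × F))

end L55

section Aux
open Finset

variable {F : Type*} [Field F] [Fintype F]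

omit [Fintype F] in
/-- bracket in coordinates -/
lemma L55.bracket_eq_zero_iff (x y : L55 F) :
    ⁅x, y⁆ = 0 ↔ (x.1 * y.2.1 - y.1 * x.2.1 = 0 ∧
      (x.1 * y.2.2.1 - y.1 * x.2.2.1) + (x.2.1 * y.2.2.2.1 - y.2.1 * x.2.2.2.1) = 0) := by
  constructor
  · intro h
    exact ⟨congrArg (fun v : L55 F => v.2.2.1) h, congrArg (fun v : L55 F => v.2.2.2.2) h⟩
  · rintro ⟨h1, h2⟩
    show ((0, 0, x.1 * y.2.1 - y.1 * x.2.1, 0,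
        x.1 * y.2.2.1 - y.1 * x.2.2.1 + (x.2.1 * y.2.2.2.1 - y.2.1 * x.2.2.2.1)) :
        F × F × F × F × F) = (0, 0, 0, 0, 0)
    rw [h1, h2]

/-- solution set as subtype of `F^5` -/
def solSet (a b c d : F) : Type _ :=
  {y : F × F × F × F × F // a * y.2.1 - y.1 * b = 0 ∧
    (a * y.2.2.1 - y.1 * c) + (b * y.2.2.2.1 - y.2.1 * d) = 0}

def eqv1 (a b c d : F) (ha : a ≠ 0) : solSet a b c d ≃ F × F × F where
  toFun y := (y.1.1, y.1.2.2.2.1, y.1.2.2.2.2)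
  invFun w := ⟨(w.1, w.1 * b / a, (w.1 * c + w.1 * b * d / a - b * w.2.1) / a, w.2.1, w.2.2),
    by constructor <;> (field_simp; try ring)⟩
  left_inv := by
    rintro ⟨⟨p, r, s, t, u⟩, h1, h2⟩
    dsimp only at h1 h2 ⊢
    have hr : r = p * b / a := by field_simp; linear_combination h1
    have hs : s = (p * c + p * b * d / a - b * t) / a := by
      field_simp
      linear_combination a * h2 + d * h1
    exact Subtype.ext (Prod.ext rfl (Prod.ext hr.symm (Prod.ext hs.symm rfl)))
  right_inv w := rfl

def eqv2 (a b c d : F) (ha : a = 0) (hb : b ≠ 0) : solSet a b c d ≃ F × F × F where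
  toFun y := (y.1.2.1, y.1.2.2.1, y.1.2.2.2.2)
  invFun w := ⟨(0, w.1, w.2.1, w.1 * d / b, w.2.2),
    by subst ha; constructor <;> (field_simp; try ring)⟩
  left_inv := by
    rintro ⟨⟨p, r, s, t, u⟩, h1, h2⟩
    subst ha
    dsimp only at h1 h2 ⊢
    have hp : p = 0 := by
      have h1' : p * b = 0 := by linear_combination -h1
      rcases mul_eq_zero.mp h1' with h | h
      · exact h
      · exact absurd h hb
    have ht : t = r * d / b := by
      field_simp
      linear_combination h2 + c * hp
    exact Subtype.ext (Prod.ext hp.symm (Prod.ext rfl (Prod.ext rfl (Prod.ext ht.symm rfl))))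
  right_inv w := by subst ha; rfl

def eqv3 (a b c d : F) (ha : a = 0) (hb : b = 0) (hc : c ≠ 0) :
    solSet a b c d ≃ F × F × F × F where
  toFun y := (y.1.2.1, y.1.2.2.1, y.1.2.2.2.1, y.1.2.2.2.2)
  invFun w := ⟨(-(w.1 * d) / c, w.1, w.2.1, w.2.2.1, w.2.2.2),
    by subst ha hb; constructor <;> (field_simp; try ring)⟩
  left_inv := by
    rintro ⟨⟨p, r, s, t, u⟩, h1, h2⟩
    subst ha hb
    dsimp only at h1 h2 ⊢
    have hp : p = -(r * d) / c := by
      field_simp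
      linear_combination -h2
    exact Subtype.ext (Prod.ext hp.symm rfl)
  right_inv w := by subst ha hb; rfl

def eqv4 (a b c d : F) (ha : a = 0) (hb : b = 0) (hc : c = 0) (hd : d ≠ 0) :
    solSet a b c d ≃ F × F × F × F where
  toFun y := (y.1.1, y.1.2.2.1, y.1.2.2.2.1, y.1.2.2.2.2)
  invFun w := ⟨(w.1, 0, w.2.1, w.2.2.1, w.2.2.2),
    by subst ha hb hc; constructor <;> simp⟩
  left_inv := by
    rintro ⟨⟨p, r, s, t, u⟩, h1, h2⟩
    subst ha hb hc
    dsimp only at h1 h2 ⊢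
    have hr : r = 0 := by
      have h2' : r * d = 0 := by linear_combination -h2
      rcases mul_eq_zero.mp h2' with h | h
      · exact h
      · exact absurd h hd
    exact Subtype.ext (Prod.ext rfl (Prod.ext hr.symm rfl))
  right_inv w := by subst ha hb hc; rfl

def eqv5 (a b c d : F) (ha : a = 0) (hb : b = 0) (hc : c = 0) (hd : d = 0) :
    solSet a b c d ≃ F × F × F × F × F where
  toFun y := y.1
  invFun w := ⟨w, by subst ha hb hc hd; constructor <;> simp⟩
  left_inv := by rintro ⟨y, h⟩; rfl
  right_inv w := rfl

lemma card_solSet [DecidableEq F] (a b c d : F) :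
    (Nat.card (solSet a b c d) : ℚ) =
      if a = 0 ∧ b = 0 then
        (if c = 0 ∧ d = 0 then (Fintype.card F : ℚ) ^ 5 else (Fintype.card F : ℚ) ^ 4)
      else (Fintype.card F : ℚ) ^ 3 := by
  classical
  by_cases ha : a = 0
  · by_cases hb : b = 0
    · by_cases hc : c = 0
      · by_cases hd : d = 0
        · rw [Nat.card_congr (eqv5 a b c d ha hb hc hd)]
          simp [Nat.card_prod, Nat.card_eq_fintype_card, ha, hb, hc, hd]; ring
        · rw [Nat.card_congr (eqv4 a b c d ha hb hc hd)]
          simp [Nat.card_prod, Nat.card_eq_fintype_card, ha, hb, hc, hd]; ring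
      · rw [Nat.card_congr (eqv3 a b c d ha hb hc)]
        simp [Nat.card_prod, Nat.card_eq_fintype_card, ha, hb, hc]; ring
    · rw [Nat.card_congr (eqv2 a b c d ha hb)]
      simp [Nat.card_prod, Nat.card_eq_fintype_card, ha, hb]; ring
  · rw [Nat.card_congr (eqv1 a b c d ha)]
    simp [Nat.card_prod, Nat.card_eq_fintype_card, ha]; ring

lemma sum_if_eq_zero [DecidableEq F] (A B : ℚ) :
    ∑ a : F, (if a = 0 then A else B) = A + ((Fintype.card F : ℚ) - 1) * B := by
  have h : ∀ a : F, (if a = 0 then A else B) = B + (if a = 0 then A - B else 0) := by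
    intro a; split_ifs <;> ring
  simp_rw [h, Finset.sum_add_distrib, Finset.sum_const, Finset.sum_ite_eq' Finset.univ (0 : F)]
  simp
  ring

lemma sum_pair [DecidableEq F] (A B : ℚ) :
    ∑ a : F, ∑ b : F, (if a = 0 ∧ b = 0 then A else B)
      = A + ((Fintype.card F : ℚ) ^ 2 - 1) * B := by
  have h : ∀ a : F, (∑ b : F, (if a = 0 ∧ b = 0 then A else B))
      = (if a = 0 then (A + ((Fintype.card F : ℚ) - 1) * B) else (Fintype.card F : ℚ) * B) := by
    intro a
    by_cases ha : a = 0
    · simp only [ha, true_and, if_true]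
      exact sum_if_eq_zero A B
    · simp [ha, Finset.sum_const, mul_comm]
  simp_rw [h, sum_if_eq_zero]
  ring

end Aux

/-- The Lie algebra `L_{5,5}` over the finite field `F_q` (`q ≥ 2`) has
commutativity degree `(q³ + q² - 1)/q⁵`. -/
theorem stmt14 (q : ℕ) (hq : 2 ≤ q) (F : Type*) [Field F] [Fintype F]
    (hF : Fintype.card F = q) :
    commDeg (L55 F) = ((q : ℚ) ^ 3 + (q : ℚ) ^ 2 - 1) / (q : ℚ) ^ 5 := by
    classical
  have hq0 : (q : ℚ) ≠ 0 := by
    have : (0:ℚ) < q := by exact_mod_cast Nat.lt_of_lt_of_le two_pos hq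
    exact ne_of_gt this
  have hcard : (Fintype.card F : ℚ) = (q : ℚ) := by exact_mod_cast congrArg Nat.cast hF
  -- numerator
  have key : (Nat.card {p : L55 F × L55 F // ⁅p.1, p.2⁆ = 0} : ℚ)
      = (q:ℚ)^8 + (q:ℚ)^7 - (q:ℚ)^5 := by
    have e1 : {p : L55 F × L55 F // ⁅p.1, p.2⁆ = 0}
        ≃ Σ x : L55 F, {y : L55 F // ⁅x, y⁆ = 0} :=
      Equiv.subtypeProdEquivSigmaSubtype (fun x y => ⁅x, y⁆ = 0)
    rw [Nat.card_congr e1, Nat.card_eq_fintype_card, Fintype.card_sigma]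
    have e2 : ∀ x : L55 F, Fintype.card {y : L55 F // ⁅x, y⁆ = 0}
        = Nat.card (solSet x.1 x.2.1 x.2.2.1 x.2.2.2.1) := by
      intro x
      rw [← Nat.card_eq_fintype_card]
      exact Nat.card_congr (Equiv.subtypeEquivRight fun y => L55.bracket_eq_zero_iff x y)
    push_cast
    calc (∑ x : L55 F, (Fintype.card {y : L55 F // ⁅x, y⁆ = 0} : ℚ))
        = ∑ x : L55 F, (Nat.card (solSet x.1 x.2.1 x.2.2.1 x.2.2.2.1) : ℚ) := by
          exact Finset.sum_congr rfl fun x _ => by rw [e2]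
      _ = ∑ x : F × F × F × F × F, (Nat.card (solSet x.1 x.2.1 x.2.2.1 x.2.2.2.1) : ℚ) := rfl
      _ = ∑ a : F, ∑ b : F, ∑ c : F, ∑ d : F, ∑ _e : F, (Nat.card (solSet a b c d) : ℚ) := by
          simp only [Fintype.sum_prod_type]
      _ = ∑ a : F, ∑ b : F, ∑ c : F, ∑ d : F,
            (q:ℚ) * (if a = 0 ∧ b = 0 then
              (if c = 0 ∧ d = 0 then (q:ℚ) ^ 5 else (q:ℚ) ^ 4) else (q:ℚ) ^ 3) := by
          refine Finset.sum_congr rfl fun a _ => Finset.sum_congr rfl fun b _ =>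
            Finset.sum_congr rfl fun c _ => Finset.sum_congr rfl fun d _ => ?_
          rw [Finset.sum_const, Finset.card_univ, nsmul_eq_mul, hF, card_solSet, hcard]
      _ = (q:ℚ) * (((q:ℚ)^5 + ((q:ℚ)^2-1) * (q:ℚ)^4) + ((q:ℚ)^2-1) * ((q:ℚ)^2 * (q:ℚ)^3)) := by
          simp_rw [← Finset.mul_sum]
          congr 1
          have step1 : ∀ a b : F, (∑ c : F, ∑ d : F, (if a = 0 ∧ b = 0 then
              (if c = 0 ∧ d = 0 then (q:ℚ) ^ 5 else (q:ℚ) ^ 4) else (q:ℚ) ^ 3))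
              = (if a = 0 ∧ b = 0 then ((q:ℚ)^5 + ((q:ℚ)^2-1) * (q:ℚ)^4)
                 else (q:ℚ)^2 * (q:ℚ)^3) := by
            intro a b
            by_cases h : a = 0 ∧ b = 0
            · simp only [h, and_self, if_true]
              rw [sum_pair, hcard]
            · simp only [h, if_false, Finset.sum_const, Finset.card_univ, nsmul_eq_mul, hF]
              push_cast
              ring
          simp_rw [step1]
          rw [sum_pair, hcard]
      _ = (q:ℚ)^8 + (q:ℚ)^7 - (q:ℚ)^5 := by ring
  have hL : (Nat.card (L55 F) : ℚ) = (q:ℚ)^5 := by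
    show (Nat.card (F × F × F × F × F) : ℚ) = (q:ℚ)^5
    simp only [Nat.card_eq_fintype_card, Fintype.card_prod, hF]
    push_cast
    ring
  rw [commDeg, key, hL]
  field_simp
end

section
/- For every positive integer k and every prime power q ≥ 2, there exists a sequence {L_m}_{m≥1} of finite-dimensional non-abelian Lie algebras over the finite field F_q with |L_m| → ∞ as m → ∞ and lim_{m→∞} d(L_m) = 1/q^k. (Explicitly, one may take L_m to be the direct sum of k copies of the Heisenberg Lie algebra H(m), for which d(L_m) = ((q^{2m}+q-1)/q^{2m+1})^k.) -/
/-- the "symplectic" part -/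
abbrev Wt (F : Type) [Field F] (m : ℕ) : Type := (Fin m → F) × (Fin m → F)

/-- symplectic-ish form. -/
def omg {F : Type} [Field F] {m : ℕ} (a b : Wt F m) : F :=
  ∑ i, a.1 i * b.2 i - ∑ i, b.1 i * a.2 i

def Heis (F : Type) [Field F] (k m : ℕ) : Type :=
  (Fin k → Wt F m) × (Fin k → F)

namespace Heis

variable {F : Type} [Field F] {k m : ℕ}

instance : AddCommGroup (Heis F k m) :=
  inferInstanceAs (AddCommGroup ((Fin k → Wt F m) × (Fin k → F)))

instance : Module F (Heis F k m) :=
  inferInstanceAs (Module F ((Fin k → Wt F m) × (Fin k → F)))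

instance [Fintype F] : Fintype (Heis F k m) :=
  inferInstanceAs (Fintype ((Fin k → Wt F m) × (Fin k → F)))

instance : Bracket (Heis F k m) (Heis F k m) :=
  ⟨fun a b => (0, fun j => omg (a.1 j) (b.1 j))⟩

lemma bracket_fst (a b : Heis F k m) : (⁅a, b⁆).1 = 0 := rfl
lemma bracket_snd (a b : Heis F k m) (j : Fin k) :
    (⁅a, b⁆).2 j = omg (a.1 j) (b.1 j) := rfl
lemma fst_add (a b : Heis F k m) : (a + b).1 = a.1 + b.1 := rfl
lemma snd_add (a b : Heis F k m) : (a + b).2 = a.2 + b.2 := rfl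
lemma fst_smul (t : F) (a : Heis F k m) : (t • a).1 = t • a.1 := rfl
lemma snd_smul (t : F) (a : Heis F k m) : (t • a).2 = t • a.2 := rfl
lemma fst_zero : ((0 : Heis F k m)).1 = 0 := rfl
lemma snd_zero : ((0 : Heis F k m)).2 = 0 := rfl

lemma omg_add_left (a a' b : Wt F m) : omg (a + a') b = omg a b + omg a' b := by
  simp [omg, add_mul, mul_add, Finset.sum_add_distrib]; ring

lemma omg_add_right (a b b' : Wt F m) : omg a (b + b') = omg a b + omg a b' := by
  simp [omg, add_mul, mul_add, Finset.sum_add_distrib]; ring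

lemma omg_smul_right (t : F) (a b : Wt F m) : omg a (t • b) = t * omg a b := by
  simp [omg, Finset.mul_sum, mul_sub, mul_left_comm, mul_comm, mul_assoc]

lemma omg_zero_left (b : Wt F m) : omg 0 b = 0 := by simp [omg]

lemma omg_zero_right (a : Wt F m) : omg a 0 = 0 := by simp [omg]

instance : LieRing (Heis F k m) where
  add_lie a b c := by
    refine Prod.ext ?_ ?_
    · rw [bracket_fst, fst_add, bracket_fst, bracket_fst, add_zero]
    · funext j
      rw [snd_add, Pi.add_apply, bracket_snd, bracket_snd, bracket_snd, fst_add,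
        Pi.add_apply, omg_add_left]
  lie_add a b c := by
    refine Prod.ext ?_ ?_
    · rw [bracket_fst, fst_add, bracket_fst, bracket_fst, add_zero]
    · funext j
      rw [snd_add, Pi.add_apply, bracket_snd, bracket_snd, bracket_snd, fst_add,
        Pi.add_apply, omg_add_right]
  lie_self a := by
    refine Prod.ext ?_ ?_
    · rw [bracket_fst, fst_zero]
    · funext j
      rw [bracket_snd, snd_zero]
      simp [omg]
  leibniz_lie a b c := by
    have key : ∀ x y : Heis F k m, y.1 = 0 → ⁅x, y⁆ = 0 := by
      intro x y hy
      refine Prod.ext (by rw [bracket_fst, fst_zero]) ?_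
      funext j
      rw [bracket_snd, hy, snd_zero]
      simpa using omg_zero_right (x.1 j)
    have key' : ∀ x y : Heis F k m, x.1 = 0 → ⁅x, y⁆ = 0 := by
      intro x y hx
      refine Prod.ext (by rw [bracket_fst, fst_zero]) ?_
      funext j
      rw [bracket_snd, hx, snd_zero]
      simpa using omg_zero_left (y.1 j)
    rw [key a ⁅b, c⁆ (bracket_fst b c), key b ⁅a, c⁆ (bracket_fst a c),
      key' ⁅a, b⁆ c (bracket_fst a b), add_zero]

instance : LieAlgebra F (Heis F k m) where
  lie_smul t a b := by
    refine Prod.ext ?_ ?_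
    · rw [bracket_fst, fst_smul, bracket_fst, smul_zero]
    · funext j
      rw [snd_smul, Pi.smul_apply, bracket_snd, bracket_snd, fst_smul, Pi.smul_apply,
        omg_smul_right, smul_eq_mul]

end Heis

section Counting

variable {F : Type} [Field F] [Fintype F] {k m : ℕ}

/-- the linear functional `omg a ·`. -/
def omgL (a : Wt F m) : Wt F m →ₗ[F] F where
  toFun b := omg a b
  map_add' := Heis.omg_add_right a
  map_smul' t b := Heis.omg_smul_right t a b

lemma omgL_surjective {a : Wt F m} (ha : a ≠ 0) : Function.Surjective (omgL a) := by
  have hb : ∃ b : Wt F m, omgL a b ≠ 0 := by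
    rcases not_and_or.mp (fun h : a.1 = 0 ∧ a.2 = 0 => ha (Prod.ext h.1 h.2)) with h | h
    · obtain ⟨i, hi⟩ := Function.ne_iff.mp h
      refine ⟨(0, Pi.single i 1), ?_⟩
      simpa [omgL, omg, Pi.single_apply] using hi
    · obtain ⟨i, hi⟩ := Function.ne_iff.mp h
      refine ⟨(Pi.single i 1, 0), ?_⟩
      simpa [omgL, omg, Pi.single_apply] using hi
  obtain ⟨b, hb⟩ := hb
  intro c
  refine ⟨(c * (omgL a b)⁻¹) • b, ?_⟩
  rw [map_smul, smul_eq_mul, mul_assoc, inv_mul_cancel₀ hb, mul_one]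

lemma card_ker_mul {a : Wt F m} (ha : a ≠ 0) :
    Nat.card {b : Wt F m // omg a b = 0} * Fintype.card F = Fintype.card (Wt F m) := by
  have h1 : Nat.card {b : Wt F m // omg a b = 0}
      = Nat.card (LinearMap.ker (omgL a)) := by
    apply Nat.card_congr
    exact Equiv.subtypeEquivRight fun b => by simp [LinearMap.mem_ker, omgL]
  have h2 : Nat.card (Wt F m ⧸ LinearMap.ker (omgL a)) = Fintype.card F := by
    rw [Nat.card_congr ((omgL a).quotKerEquivOfSurjective (omgL_surjective ha)).toEquiv,
      Nat.card_eq_fintype_card]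
  rw [h1, ← h2, ← Submodule.card_eq_card_quotient_mul_card (LinearMap.ker (omgL a)),
    Nat.card_eq_fintype_card]

end Counting

section Counting2

variable {F : Type} [Field F] [Fintype F] {k m : ℕ}

lemma card_Wt : Fintype.card (Wt F m) = Fintype.card F ^ (2 * m) := by
  simp [two_mul, pow_add]

lemma card_ker {a : Wt F m} (ha : a ≠ 0) (hm : 1 ≤ m) :
    Nat.card {b : Wt F m // omg a b = 0} = Fintype.card F ^ (2 * m - 1) := by
  have h := card_ker_mul ha
  rw [card_Wt] at h
  have hq : 0 < Fintype.card F := Fintype.card_pos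
  have h2 : Fintype.card F ^ (2 * m) = Fintype.card F ^ (2 * m - 1) * Fintype.card F := by
    rw [← pow_succ]
    congr 1
    omega
  rw [h2] at h
  exact Nat.eq_of_mul_eq_mul_right hq h

lemma card_pairs (hm : 1 ≤ m) :
    Nat.card {v : Wt F m × Wt F m // omg v.1 v.2 = 0}
      = Fintype.card F ^ (2 * m)
        + (Fintype.card F ^ (2 * m) - 1) * Fintype.card F ^ (2 * m - 1) := by
  classical
  rw [Nat.card_congr (Equiv.subtypeProdEquivSigmaSubtype fun (a b : Wt F m) => omg a b = 0),
    Nat.card_eq_fintype_card, Fintype.card_sigma]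
  simp only [← Nat.card_eq_fintype_card]
  rw [← Finset.add_sum_erase _ _ (Finset.mem_univ (0 : Wt F m))]
  have h0 : Nat.card {b : Wt F m // omg 0 b = 0} = Fintype.card F ^ (2 * m) := by
    rw [Nat.card_congr (Equiv.subtypeUnivEquiv fun b => Heis.omg_zero_left b),
      Nat.card_eq_fintype_card, card_Wt]
  rw [h0, Finset.sum_congr rfl
    (fun a haa => card_ker (Finset.ne_of_mem_erase haa) hm), Finset.sum_const,
    Finset.card_erase_of_mem (Finset.mem_univ _), Finset.card_univ, card_Wt, smul_eq_mul,
    Nat.card_eq_fintype_card]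

lemma card_Heis : Nat.card (Heis F k m) = Fintype.card F ^ (k * (2 * m + 1)) := by
  rw [Nat.card_eq_fintype_card]
  show Fintype.card ((Fin k → Wt F m) × (Fin k → F)) = _
  rw [Fintype.card_prod, Fintype.card_fun, Fintype.card_fun, card_Wt, Fintype.card_fin,
    ← pow_mul, ← pow_add]
  congr 1
  ring

/-- Commuting pairs in `Heis` decompose. -/
def pairsEquiv (F : Type) [Field F] (k m : ℕ) :
    {p : Heis F k m × Heis F k m // ⁅p.1, p.2⁆ = 0}
      ≃ (Π _j : Fin k, {v : Wt F m × Wt F m // omg v.1 v.2 = 0})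
          × ((Fin k → F) × (Fin k → F)) where
  toFun p := (fun j => ⟨(p.1.1.1 j, p.1.2.1 j), congrFun (congrArg Prod.snd p.2) j⟩,
    (p.1.1.2, p.1.2.2))
  invFun x := ⟨((fun j => (x.1 j).1.1, x.2.1), (fun j => (x.1 j).1.2, x.2.2)),
    Prod.ext rfl (funext fun j => (x.1 j).2)⟩
  left_inv p := rfl
  right_inv x := rfl

lemma card_comm_pairs (hm : 1 ≤ m) :
    Nat.card {p : Heis F k m × Heis F k m // ⁅p.1, p.2⁆ = 0}
      = (Fintype.card F ^ (2 * m)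
          + (Fintype.card F ^ (2 * m) - 1) * Fintype.card F ^ (2 * m - 1)) ^ k
        * (Fintype.card F ^ k * Fintype.card F ^ k) := by
  rw [Nat.card_congr (pairsEquiv F k m), Nat.card_prod, Nat.card_prod, Nat.card_pi,
    Finset.prod_const, Finset.card_univ, Fintype.card_fin, card_pairs hm,
    Nat.card_fun, Nat.card_eq_fintype_card, Nat.card_eq_fintype_card, Fintype.card_fin]

end Counting2

lemma heis_not_abelian {F : Type} [Field F] {k m : ℕ} (hk : 0 < k) :
    ¬ IsLieAbelian (Heis F k (m + 1)) := by
  intro h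
  have hb := h.trivial
    ((((fun _ => (Pi.single 0 1, 0)) : Fin k → Wt F (m + 1)), 0) : Heis F k (m + 1))
    ((((fun _ => (0, Pi.single 0 1)) : Fin k → Wt F (m + 1)), 0) : Heis F k (m + 1))
  have h2 := congrFun (congrArg Prod.snd hb) ⟨0, hk⟩
  change omg _ _ = (0 : F) at h2
  simp [omg, Pi.single_apply] at h2

/-- A bundled finite Lie algebra over the field `F`. -/
structure FinLieAlgBundle (F : Type) [Field F] : Type 1 where
  /-- the underlying type -/
  carrier : Type
  [lieRing : LieRing carrier]
  [lieAlgebra : LieAlgebra F carrier]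
  [fintype : Fintype carrier]

attribute [instance] FinLieAlgBundle.lieRing FinLieAlgBundle.lieAlgebra FinLieAlgBundle.fintype

/-- For every positive integer `k` and every finite field `F_q` (`q ≥ 2`),
there is a sequence of finite-dimensional non-abelian Lie algebras over `F_q` whose
cardinalities tend to infinity and whose commutativity degrees tend to `1/q^k`. -/
theorem stmt17 (k : ℕ) (hk : 1 ≤ k) (q : ℕ) (hq : 2 ≤ q) (F : Type) [Field F] [Fintype F]
    (hF : Fintype.card F = q) :
    ∃ L : ℕ → FinLieAlgBundle F,
      (∀ m, ¬ IsLieAbelian (L m).carrier) ∧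
      Filter.Tendsto (fun m => Nat.card (L m).carrier) Filter.atTop Filter.atTop ∧
      Filter.Tendsto (fun m => (commDeg (L m).carrier : ℝ)) Filter.atTop
        (nhds (1 / (q : ℝ) ^ k)) := by
  refine ⟨fun m => ⟨Heis F k (m + 1)⟩, fun m => heis_not_abelian hk, ?_, ?_⟩
  · -- cardinality tends to infinity
    apply Filter.tendsto_atTop_mono (f := fun m => m)
    · intro m
      have : m < 2 ^ m := Nat.lt_two_pow_self
      calc m ≤ 2 ^ m := le_of_lt this
        _ ≤ 2 ^ (k * (2 * (m + 1) + 1)) := Nat.pow_le_pow_right (by norm_num) (by nlinarith)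
        _ ≤ q ^ (k * (2 * (m + 1) + 1)) := Nat.pow_le_pow_left hq _
        _ = Nat.card (Heis F k (m + 1)) := by rw [card_Heis, hF]
    · exact Filter.tendsto_id
  · -- commutativity degree
    set t : ℝ := (q : ℝ) with ht
    have ht2 : (2 : ℝ) ≤ t := by rw [ht]; exact_mod_cast hq
    have ht0 : t ≠ 0 := by positivity
    have hformula : ∀ m : ℕ, (commDeg (Heis F k (m + 1)) : ℝ)
        = (1 / t + (1 - 1 / t) * (1 / t ^ 2) ^ (m + 1)) ^ k := by
      intro m
      have h1 : (1 : ℕ) ≤ q ^ (2 * (m + 1)) := Nat.one_le_pow _ _ (by omega)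
      rw [commDeg, card_comm_pairs (by omega), card_Heis, hF]
      rw [show k * (2 * (m + 1) + 1) = k * (2 * m + 3) from by ring,
        show 2 * (m + 1) - 1 = 2 * m + 1 from by omega,
        show 2 * (m + 1) = 2 * m + 2 from by ring]
      rw [show 2 * (m + 1) = 2 * m + 2 from by ring] at h1
      push_cast [Nat.cast_sub h1]
      have hrw : ((t ^ (2 * m + 2) + (t ^ (2 * m + 2) - 1) * t ^ (2 * m + 1)) ^ k
          * (t ^ k * t ^ k)) / (t ^ (k * (2 * m + 3))) ^ 2
          = ((t ^ (2 * m + 2) + (t ^ (2 * m + 2) - 1) * t ^ (2 * m + 1)) * (t * t)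
              / (t ^ (2 * m + 3)) ^ 2) ^ k := by
        rw [div_pow, mul_pow, mul_pow, pow_mul]
        ring
      rw [hrw]
      congr 1
      have hu : (t ^ 2) ^ m ≠ 0 := by positivity
      simp only [pow_add, pow_mul, pow_one, pow_succ, pow_zero, one_mul, one_div, inv_pow,
        div_pow, one_pow]
      field_simp
      ring
    have hr0 : (0 : ℝ) ≤ 1 / t ^ 2 := by positivity
    have hr1 : 1 / t ^ 2 < 1 := by
      rw [div_lt_one (by positivity)]
      nlinarith
    have h0 : Filter.Tendsto (fun m : ℕ => (1 / t ^ 2) ^ (m + 1)) Filter.atTop (nhds 0) :=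
      (tendsto_pow_atTop_nhds_zero_of_lt_one hr0 hr1).comp (Filter.tendsto_add_atTop_nat 1)
    have hb : Filter.Tendsto (fun m : ℕ => 1 / t + (1 - 1 / t) * (1 / t ^ 2) ^ (m + 1))
        Filter.atTop (nhds (1 / t)) := by
      simpa using tendsto_const_nhds.add (h0.const_mul (1 - 1 / t))
    have hbk := hb.pow k
    rw [div_pow, one_pow] at hbk
    exact hbk.congr fun m => (hformula m).symm
end

section
/- Let L be a finite-dimensional non-abelian Lie algebra over the finite field F_q (q ≥ 2). Then dim L² = 1 if and only if d(L) lies in the half-open interval (1/q, (q²+q-1)/q³]. -/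
open Module

section counting
variable {F : Type*} [Field F] [Fintype F]
    {L : Type*} [AddCommGroup L] [Module F L] [Fintype L]

private lemma card_ker_functional (g : L →ₗ[F] F) (hg : g ≠ 0) :
    Fintype.card F * Nat.card (LinearMap.ker g) = Nat.card L := by
  have h1 : LinearMap.range g = ⊤ := by
    obtain ⟨x, hx⟩ : ∃ x, g x ≠ 0 := by
      by_contra h; push_neg at h; exact hg (LinearMap.ext fun x => h x)
    rw [Submodule.eq_top_iff']
    intro c
    exact ⟨(c / g x) • x, by simp [div_mul_cancel₀, hx]⟩
  have h2 := Submodule.card_eq_card_quotient_mul_card (LinearMap.ker g)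
  rw [Nat.card_congr (g.quotKerEquivRange).toEquiv, h1,
    Nat.card_congr (Submodule.topEquiv (R := F) (M := F)).toEquiv,
    Nat.card_eq_fintype_card] at h2
  rw [Nat.card_eq_fintype_card (α := L), h2, Nat.card_eq_fintype_card (α := F), Nat.mul_comm]

set_option linter.unusedSectionVars false in
private lemma count_pairs (B : L →ₗ[F] L →ₗ[F] F) :
    Fintype.card F * Nat.card {p : L × L // B p.1 p.2 = 0}
      + Nat.card (LinearMap.ker B) * Nat.card L =
    Nat.card (LinearMap.ker B) * (Fintype.card F * Nat.card L) + Nat.card L ^ 2 := by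
  classical
  have hN : Nat.card {p : L × L // B p.1 p.2 = 0}
      = ∑ x : L, Nat.card {y : L // B x y = 0} := by
    rw [Nat.card_eq_fintype_card,
      Fintype.card_congr (Equiv.subtypeProdEquivSigmaSubtype fun x y => B x y = 0),
      Fintype.card_sigma]
    simp [Nat.card_eq_fintype_card]
  have hker : ∀ x : L, Nat.card {y : L // B x y = 0} = Nat.card (LinearMap.ker (B x)) :=
    fun x => Nat.card_congr (Equiv.subtypeEquivRight (by simp [LinearMap.mem_ker]))
  have key : ∀ x : L,
      Fintype.card F * Nat.card (LinearMap.ker (B x))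
        + (if x ∈ LinearMap.ker B then Nat.card L else 0)
      = (if x ∈ LinearMap.ker B then Fintype.card F * Nat.card L else 0) + Nat.card L := by
    intro x
    by_cases hx : x ∈ LinearMap.ker B
    · have hBx : B x = 0 := hx
      have : Nat.card (LinearMap.ker (B x)) = Nat.card L := by
        rw [hBx, LinearMap.ker_zero]
        exact Nat.card_congr (Submodule.topEquiv).toEquiv
      rw [if_pos hx, if_pos hx, this]
    · have hBx : B x ≠ 0 := fun h => hx h
      rw [if_neg hx, if_neg hx, Nat.add_zero, Nat.zero_add, card_ker_functional _ hBx]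
  have hk : ∀ c : ℕ, Nat.card (LinearMap.ker B) * c
      = ∑ x : L, (if x ∈ LinearMap.ker B then c else 0) := by
    intro c
    rw [← Finset.sum_filter, Finset.sum_const, smul_eq_mul, Nat.card_eq_fintype_card,
      Fintype.card_subtype]
  have hsq : Nat.card L ^ 2 = ∑ _x : L, Nat.card L := by
    rw [Finset.sum_const, smul_eq_mul, Nat.card_eq_fintype_card, sq, Finset.card_univ]
  rw [hN, Finset.mul_sum, hk, hk, hsq, ← Finset.sum_add_distrib, ← Finset.sum_add_distrib]
  exact Finset.sum_congr rfl fun x _ => by rw [hker x]; exact key x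

set_option linter.unusedSectionVars false in
private lemma ker_codim_two (B : L →ₗ[F] L →ₗ[F] F) (halt : ∀ x, B x x = 0) (hB : B ≠ 0) :
    finrank F (LinearMap.ker B) + 2 ≤ finrank F L := by
  have hfd : FiniteDimensional F L := Module.Finite.of_finite
  have hrn := LinearMap.finrank_range_add_finrank_ker B
  suffices h : 2 ≤ finrank F (LinearMap.range B) by omega
  by_contra hlt
  push_neg at hlt
  interval_cases hr : finrank F (LinearMap.range B)
  · exact hB (LinearMap.range_eq_bot.mp (Submodule.finrank_eq_zero.mp hr))
  · obtain ⟨v, hv0, hv⟩ := (haveI := Module.Free.of_divisionRing F (LinearMap.range B); (finrank_eq_one_iff' (K := F) (V := LinearMap.range B)).mp hr)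
    set g : Module.Dual F L := (v : Module.Dual F L) with hgdef
    have hg0 : g ≠ 0 := fun h => hv0 (Subtype.ext h)
    have key : ∀ x : L, B x ≠ 0 → g x = 0 := by
      intro x hx
      obtain ⟨c, hc⟩ := hv ⟨B x, LinearMap.mem_range_self B x⟩
      have hBx : B x = c • g := by
        have := congrArg (Subtype.val) hc
        simpa [hgdef] using this.symm
      have hc0 : c ≠ 0 := fun h => hx (by simp [hBx, h])
      have halx := halt x
      rw [hBx] at halx
      simp only [LinearMap.smul_apply, smul_eq_mul] at halx
      rcases mul_eq_zero.mp halx with h | h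
      · exact absurd h hc0
      · exact h
    obtain ⟨u, hu⟩ : ∃ u, B u ≠ 0 := by
      by_contra h'; push_neg at h'; exact hB (LinearMap.ext fun x => h' x)
    obtain ⟨w, hw⟩ : ∃ w, g w ≠ 0 := by
      by_contra h'; push_neg at h'; exact hg0 (LinearMap.ext fun x => h' x)
    have hgu : g u = 0 := key u hu
    have hBw : B w = 0 := by by_contra h'; exact hw (key w h')
    have hBuw : B (u + w) ≠ 0 := by rw [map_add, hBw, add_zero]; exact hu
    have := key _ hBuw
    rw [map_add, hgu, zero_add] at this
    exact hw this

end counting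

private lemma count_prod {α β : Type*} [Fintype α] [Fintype β] (P : α → β → Prop) :
    Nat.card {p : α × β // P p.1 p.2} = ∑ a : α, Nat.card {b : β // P a b} := by
  classical
  rw [Nat.card_eq_fintype_card,
    Fintype.card_congr (Equiv.subtypeProdEquivSigmaSubtype P), Fintype.card_sigma]
  simp [Nat.card_eq_fintype_card]

private lemma count_prod' {α β : Type*} [Fintype α] [Fintype β] (P : α → β → Prop) :
    Nat.card {p : α × β // P p.1 p.2} = ∑ b : β, Nat.card {a : α // P a b} := by
  rw [← count_prod fun b a => P a b]
  exact Nat.card_congr ((Equiv.prodComm α β).subtypeEquiv fun p => Iff.rfl)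

section lie
variable {F : Type*} [Field F] {L : Type*} [LieRing L] [LieAlgebra F L]

private lemma mem_derived (x y : L) : ⁅x, y⁆ ∈ LieAlgebra.derivedSeries F L 1 := by
  rw [LieAlgebra.derivedSeries_def, LieAlgebra.derivedSeriesOfIdeal_succ]
  simp only [LieAlgebra.derivedSeriesOfIdeal_zero]
  exact LieSubmodule.lie_mem_lie (LieSubmodule.mem_top x) (LieSubmodule.mem_top y)

private lemma mkd_add (x x' y : L) :
    (⟨⁅x + x', y⁆, mem_derived (x + x') y⟩ : ↥(LieAlgebra.derivedSeries F L 1))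
      = ⟨⁅x, y⁆, mem_derived x y⟩ + ⟨⁅x', y⁆, mem_derived x' y⟩ := Subtype.ext (by simp [add_lie])

private lemma mkd_smul (c : F) (x y : L) :
    (⟨⁅c • x, y⁆, mem_derived (c • x) y⟩ : ↥(LieAlgebra.derivedSeries F L 1))
      = c • ⟨⁅x, y⁆, mem_derived x y⟩ := Subtype.ext (by simp [smul_lie])

private lemma mkd_add' (x y y' : L) :
    (⟨⁅x, y + y'⁆, mem_derived x (y + y')⟩ : ↥(LieAlgebra.derivedSeries F L 1))
      = ⟨⁅x, y⁆, mem_derived x y⟩ + ⟨⁅x, y'⁆, mem_derived x y'⟩ := Subtype.ext (by simp [lie_add])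

private lemma mkd_smul' (c : F) (x y : L) :
    (⟨⁅x, c • y⁆, mem_derived x (c • y)⟩ : ↥(LieAlgebra.derivedSeries F L 1))
      = c • ⟨⁅x, y⁆, mem_derived x y⟩ := Subtype.ext (by simp [lie_smul])

private noncomputable def brktForm (f : Module.Dual F ↥(LieAlgebra.derivedSeries F L 1)) :
    L →ₗ[F] L →ₗ[F] F :=
  LinearMap.mk₂ F (fun x y => f ⟨⁅x, y⁆, mem_derived x y⟩)
    (fun x x' y => by simp only [mkd_add, map_add])
    (fun c x y => by simp only [mkd_smul, map_smul])
    (fun x y y' => by simp only [mkd_add', map_add])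
    (fun c x y => by simp only [mkd_smul', map_smul])

private lemma brktForm_apply (f : Module.Dual F ↥(LieAlgebra.derivedSeries F L 1)) (x y : L) :
    brktForm f x y = f ⟨⁅x, y⁆, mem_derived x y⟩ := rfl

private lemma brktForm_alt (f : Module.Dual F ↥(LieAlgebra.derivedSeries F L 1)) (x : L) :
    brktForm f x x = 0 := by
  rw [brktForm_apply]
  have : (⟨⁅x, x⁆, mem_derived x x⟩ : ↥(LieAlgebra.derivedSeries F L 1)) = 0 :=
    Subtype.ext (lie_self x)
  rw [this, map_zero]

private lemma brktForm_zero :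
    brktForm (0 : Module.Dual F ↥(LieAlgebra.derivedSeries F L 1)) = (0 : L →ₗ[F] L →ₗ[F] F) := by
  ext x y
  rfl

private lemma eq_zero_of_brktForm_eq_zero
    (f : Module.Dual F ↥(LieAlgebra.derivedSeries F L 1))
    (h : brktForm f = 0) : f = 0 := by
  have hvanish : ∀ x y : L, f ⟨⁅x, y⁆, mem_derived x y⟩ = 0 := by
    intro x y
    have := congrArg (fun B => B x y) h
    simpa [brktForm_apply] using this
  have hW : LieSubmodule.toSubmodule (LieAlgebra.derivedSeries F L 1)
      = Submodule.span F
        {m : L | ∃ x ∈ (⊤ : LieIdeal F L), ∃ n ∈ (⊤ : LieIdeal F L), ⁅x, n⁆ = m} := by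
    rw [LieAlgebra.derivedSeries_def, LieAlgebra.derivedSeriesOfIdeal_succ]
    simp only [LieAlgebra.derivedSeriesOfIdeal_zero]
    exact LieSubmodule.lieIdeal_oper_eq_linear_span' (R := F) (L := L) (M := L) (I := ⊤) (N := ⊤)
  ext ⟨w, hw⟩
  have hw' : w ∈ Submodule.span F
      {m : L | ∃ x ∈ (⊤ : LieIdeal F L), ∃ n ∈ (⊤ : LieIdeal F L), ⁅x, n⁆ = m} := by
    rw [← hW]
    exact hw
  have conv : ∀ {v : L}, v ∈ Submodule.span F
      {m : L | ∃ x ∈ (⊤ : LieIdeal F L), ∃ n ∈ (⊤ : LieIdeal F L), ⁅x, n⁆ = m} →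
      v ∈ LieAlgebra.derivedSeries F L 1 := by
    intro v hv
    rw [← LieSubmodule.mem_toSubmodule, hW]
    exact hv
  have key : ∀ v (hv : v ∈ Submodule.span F
      {m : L | ∃ x ∈ (⊤ : LieIdeal F L), ∃ n ∈ (⊤ : LieIdeal F L), ⁅x, n⁆ = m}),
      f ⟨v, conv hv⟩ = 0 := by
    intro v hv
    induction hv using Submodule.span_induction with
    | mem m hm =>
        obtain ⟨x, -, n, -, rfl⟩ := hm
        exact hvanish x n
    | zero =>
        have : (⟨(0 : L), conv (Submodule.zero_mem _)⟩ :
            ↥(LieAlgebra.derivedSeries F L 1)) = 0 := Subtype.ext rfl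
        rw [this, map_zero]
    | add v₁ v₂ hv₁ hv₂ ih₁ ih₂ =>
        have : (⟨v₁ + v₂, conv (Submodule.add_mem _ hv₁ hv₂)⟩ :
            ↥(LieAlgebra.derivedSeries F L 1))
            = ⟨v₁, conv hv₁⟩ + ⟨v₂, conv hv₂⟩ := Subtype.ext rfl
        rw [this, map_add, ih₁, ih₂, add_zero]
    | smul c v₁ hv₁ ih =>
        have : (⟨c • v₁, conv (Submodule.smul_mem _ c hv₁)⟩ :
            ↥(LieAlgebra.derivedSeries F L 1)) = c • ⟨v₁, conv hv₁⟩ := Subtype.ext rfl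
        rw [this, map_smul, ih, smul_zero]
  exact key w hw'
end lie

set_option maxHeartbeats 1000000 in
/-- A finite-dimensional non-abelian Lie algebra over the finite field
`F_q` (`q ≥ 2`) has derived subalgebra of dimension `1` if and only if its commutativity
degree lies in the half-open interval `(1/q, (q² + q - 1)/q³]`. -/
theorem stmt18 (q : ℕ) (hq : 2 ≤ q) (F : Type*) [Field F] [Fintype F]
    (hF : Fintype.card F = q) (L : Type*) [LieRing L] [LieAlgebra F L] [Fintype L]
    (hna : ¬ IsLieAbelian L) :
    Module.finrank F (LieAlgebra.derivedSeries F L 1) = 1 ↔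
      (1 / (q : ℚ) < commDeg L ∧
        commDeg L ≤ ((q : ℚ) ^ 2 + q - 1) / (q : ℚ) ^ 3) := by
  classical
  have hFD : FiniteDimensional F L := Module.Finite.of_finite
  have hq0 : 0 < q := by omega
  have hWfd : FiniteDimensional F ↥(LieAlgebra.derivedSeries F L 1) := Module.Finite.of_finite
  have hDfin : Finite (Module.Dual F ↥(LieAlgebra.derivedSeries F L 1)) :=
    Module.finite_of_finite F
  have hDfty : Fintype (Module.Dual F ↥(LieAlgebra.derivedSeries F L 1)) := Fintype.ofFinite _
  set n := Module.finrank F L with hn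
  set s := Module.finrank F ↥(LieAlgebra.derivedSeries F L 1) with hs
  set Q : ℚ := (q : ℚ) with hQdef
  have hQ2 : (2 : ℚ) ≤ Q := by rw [hQdef]; exact_mod_cast hq
  have hQ0 : (0 : ℚ) < Q := by linarith
  set X : ℚ := Q ^ n with hXdef
  have hX0 : (0 : ℚ) < X := pow_pos hQ0 n
  have hcardL : Nat.card L = q ^ n := by
    rw [Nat.card_eq_fintype_card, card_eq_pow_finrank (K := F), hF]
  have hcardD : Nat.card (Module.Dual F ↥(LieAlgebra.derivedSeries F L 1)) = q ^ s := by
    rw [Nat.card_eq_fintype_card, card_eq_pow_finrank (K := F), hF, Subspace.dual_finrank_eq]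
  set N := Nat.card {p : L × L // ⁅p.1, p.2⁆ = 0} with hNdef
  have hd : commDeg L = (N : ℚ) / X ^ 2 := by
    rw [commDeg, hcardL, hXdef, hQdef]
    push_cast
    rfl
  -- master identity in ℚ, for every dual functional
  have master : ∀ f : Module.Dual F ↥(LieAlgebra.derivedSeries F L 1),
      Q * (Nat.card {p : L × L // brktForm f p.1 p.2 = 0} : ℚ)
        = (Nat.card (LinearMap.ker (brktForm f)) : ℚ) * X * (Q - 1) + X ^ 2 := by
    intro f
    have h := count_pairs (brktForm f)
    rw [hcardL, hF] at h
    have h' := congrArg (Nat.cast (R := ℚ)) h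
    push_cast at h'
    rw [hXdef, hQdef]
    push_cast
    linear_combination h'
  -- kernel bound for nonzero functionals
  have hkb : ∀ f : Module.Dual F ↥(LieAlgebra.derivedSeries F L 1), f ≠ 0 →
      (Nat.card (LinearMap.ker (brktForm f)) : ℚ) * Q ^ 2 ≤ X := by
    intro f hf
    have hB : brktForm f ≠ 0 := fun h => hf (eq_zero_of_brktForm_eq_zero f h)
    have h2 := ker_codim_two (brktForm f) (brktForm_alt f) hB
    have : Fintype (LinearMap.ker (brktForm f)) := Fintype.ofFinite _
    have hck : Nat.card (LinearMap.ker (brktForm f))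
        = q ^ Module.finrank F (LinearMap.ker (brktForm f)) := by
      rw [Nat.card_eq_fintype_card, card_eq_pow_finrank (K := F), hF]
    have hle : q ^ (Module.finrank F (LinearMap.ker (brktForm f)) + 2) ≤ q ^ n :=
      Nat.pow_le_pow_right hq0 h2
    rw [hck, hXdef, hQdef]
    calc ((q ^ Module.finrank F (LinearMap.ker (brktForm f)) : ℕ) : ℚ) * (q : ℚ) ^ 2
        = ((q ^ (Module.finrank F (LinearMap.ker (brktForm f)) + 2) : ℕ) : ℚ) := by
          push_cast; ring
      _ ≤ ((q ^ n : ℕ) : ℚ) := by exact_mod_cast hle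
      _ = (q : ℚ) ^ n := by push_cast; rfl
  have hn2 : 2 ≤ n := by
    obtain ⟨x, y, hxy⟩ : ∃ x y : L, ⁅x, y⁆ ≠ 0 := by
      by_contra h; push_neg at h
      exact hna ⟨fun x y => h x y⟩
    have hw : (⟨⁅x, y⁆, mem_derived x y⟩ : ↥(LieAlgebra.derivedSeries F L 1)) ≠ 0 :=
      fun h => hxy (by simpa using congrArg Subtype.val h)
    obtain ⟨f, hfw⟩ : ∃ f : Module.Dual F ↥(LieAlgebra.derivedSeries F L 1),
        f ⟨⁅x, y⁆, mem_derived x y⟩ ≠ 0 := by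
      by_contra h; push_neg at h
      exact hw ((Module.forall_dual_apply_eq_zero_iff F _).mp h)
    have hB : brktForm f ≠ 0 := by
      intro h
      apply hfw
      rw [← brktForm_apply, h]
      rfl
    have := ker_codim_two (brktForm f) (brktForm_alt f) hB
    omega
  constructor
  · -- forward direction: s = 1 implies the bounds
    intro hs1
    have hWnt : Nontrivial ↥(LieAlgebra.derivedSeries F L 1) := by
      apply Module.nontrivial_of_finrank_pos (R := F)
      rw [← hs, hs1]; norm_num
    obtain ⟨w₀, hw₀⟩ := exists_ne (0 : ↥(LieAlgebra.derivedSeries F L 1))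
    obtain ⟨f₀, hf₀w⟩ : ∃ f₀ : Module.Dual F ↥(LieAlgebra.derivedSeries F L 1),
        f₀ w₀ ≠ 0 := by
      by_contra h; push_neg at h
      exact hw₀ ((Module.forall_dual_apply_eq_zero_iff F _).mp h)
    have hf₀ : f₀ ≠ 0 := fun h => hf₀w (by rw [h]; rfl)
    have hker : LinearMap.ker f₀ = ⊥ := by
      have hr := LinearMap.finrank_range_add_finrank_ker f₀
      rw [← hs, hs1] at hr
      have hrange : LinearMap.range f₀ ≠ ⊥ := fun h => hf₀ (LinearMap.range_eq_bot.mp h)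
      have hrpos : 0 < Module.finrank F (LinearMap.range f₀) := by
        by_contra h
        push_neg at h
        exact hrange (Submodule.finrank_eq_zero.mp (Nat.le_zero.mp h))
      have : Module.finrank F (LinearMap.ker f₀) = 0 := by omega
      exact Submodule.finrank_eq_zero.mp this
    have hinj : ∀ z, f₀ z = 0 → z = 0 := by
      intro z hz
      have : z ∈ LinearMap.ker f₀ := hz
      rw [hker] at this
      simpa using this
    have hNeq : N = Nat.card {p : L × L // brktForm f₀ p.1 p.2 = 0} := by
      apply Nat.card_congr (Equiv.subtypeEquivRight _)
      intro p
      rw [brktForm_apply]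
      constructor
      · intro h0
        rw [show (⟨⁅p.1, p.2⁆, mem_derived p.1 p.2⟩ :
            ↥(LieAlgebra.derivedSeries F L 1)) = 0 from Subtype.ext h0, map_zero]
      · intro h0
        exact congrArg Subtype.val (hinj _ h0)
    have hK1 : 1 ≤ (Nat.card (LinearMap.ker (brktForm f₀)) : ℚ) := by
      exact_mod_cast Nat.one_le_iff_ne_zero.mpr Nat.card_pos.ne'
    have hKb := hkb f₀ hf₀
    have hm := master f₀
    rw [← hNeq] at hm
    set K : ℚ := (Nat.card (LinearMap.ker (brktForm f₀)) : ℚ) with hKdef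
    rw [hd]
    constructor
    · rw [div_lt_div_iff₀ hQ0 (by positivity)]
      nlinarith [hm, hK1, hX0, hQ2, mul_pos (mul_pos (lt_of_lt_of_le one_pos hK1) hX0)
        (by linarith : (0 : ℚ) < Q - 1)]
    · rw [div_le_div_iff₀ (by positivity) (by positivity)]
      have hm2 : Q ^ 3 * (N : ℚ) = K * Q ^ 2 * X * (Q - 1) + Q ^ 2 * X ^ 2 := by
        linear_combination Q ^ 2 * hm
      nlinarith [hm2, hKb, hX0, hQ2,
        mul_nonneg (sub_nonneg.mpr hKb) (mul_nonneg hX0.le (by linarith : (0 : ℚ) ≤ Q - 1))]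
  · -- backward direction
    rintro ⟨hlow, -⟩
    by_contra hs1
    have hs0 : s ≠ 0 := by
      intro h0
      apply hna
      have hbot : LieAlgebra.derivedSeries F L 1 = ⊥ := by
        rw [← LieSubmodule.toSubmodule_inj, LieSubmodule.bot_toSubmodule]
        exact Submodule.finrank_eq_zero.mp h0
      rw [LieAlgebra.derivedSeries_def] at hbot
      have h2 := (LieAlgebra.abelian_iff_derived_one_eq_bot (⊤ : LieIdeal F L)).mpr hbot
      exact (lie_abelian_iff_equiv_lie_abelian LieIdeal.topEquiv).mp h2
    have hs2 : 2 ≤ s := by omega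
    set D := Nat.card (Module.Dual F ↥(LieAlgebra.derivedSeries F L 1)) with hDdef
    have hD1 : 1 ≤ D := Nat.card_pos
    set Dq : ℚ := Q ^ s with hDqdef
    have hDq0 : (0 : ℚ) < Dq := pow_pos hQ0 s
    have hcastD : (D : ℚ) = Dq := by
      rw [hcardD, hDqdef, hQdef]; push_cast; rfl
    set T := Nat.card {t : Module.Dual F ↥(LieAlgebra.derivedSeries F L 1) × (L × L) //
        brktForm t.1 t.2.1 t.2.2 = 0} with hTdef
    have hT1 : T = ∑ f : Module.Dual F ↥(LieAlgebra.derivedSeries F L 1),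
        Nat.card {p : L × L // brktForm f p.1 p.2 = 0} :=
      count_prod (α := Module.Dual F ↥(LieAlgebra.derivedSeries F L 1)) (β := L × L)
        (fun f p => brktForm f p.1 p.2 = 0)
    have hT2 : T = ∑ p : L × L,
        Nat.card {f : Module.Dual F ↥(LieAlgebra.derivedSeries F L 1) //
          brktForm f p.1 p.2 = 0} :=
      count_prod' (α := Module.Dual F ↥(LieAlgebra.derivedSeries F L 1)) (β := L × L)
        (fun f p => brktForm f p.1 p.2 = 0)
    -- pointwise dual count
    have key2 : ∀ p : L × L,
        q * Nat.card {f : Module.Dual F ↥(LieAlgebra.derivedSeries F L 1) //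
            brktForm f p.1 p.2 = 0}
          + (if ⁅p.1, p.2⁆ = 0 then D else 0)
        = (if ⁅p.1, p.2⁆ = 0 then q * D else 0) + D := by
      intro p
      by_cases hp : ⁅p.1, p.2⁆ = 0
      · rw [if_pos hp, if_pos hp]
        have hall : Nat.card {f : Module.Dual F ↥(LieAlgebra.derivedSeries F L 1) //
            brktForm f p.1 p.2 = 0} = D := by
          rw [hDdef]
          apply Nat.card_congr (Equiv.subtypeUnivEquiv _)
          intro f
          rw [brktForm_apply, show (⟨⁅p.1, p.2⁆, mem_derived p.1 p.2⟩ :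
            ↥(LieAlgebra.derivedSeries F L 1)) = 0 from Subtype.ext hp, map_zero]
        rw [hall]
      · rw [if_neg hp, if_neg hp, Nat.add_zero, Nat.zero_add]
        have hwne : (⟨⁅p.1, p.2⁆, mem_derived p.1 p.2⟩ :
            ↥(LieAlgebra.derivedSeries F L 1)) ≠ 0 :=
          fun h => hp (congrArg Subtype.val h)
        have hev : Module.Dual.eval F ↥(LieAlgebra.derivedSeries F L 1)
            ⟨⁅p.1, p.2⁆, mem_derived p.1 p.2⟩ ≠ 0 := by
          intro h
          apply hwne
          rw [← Module.forall_dual_apply_eq_zero_iff F]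
          intro φ
          have := LinearMap.ext_iff.mp h φ
          simpa [Module.Dual.eval_apply] using this
        have hcf := card_ker_functional
          (Module.Dual.eval F ↥(LieAlgebra.derivedSeries F L 1)
            ⟨⁅p.1, p.2⁆, mem_derived p.1 p.2⟩) hev
        rw [hF] at hcf
        rw [← hDdef] at hcf
        rw [← hcf]
        first
        | rfl
        | (congr 1;
           exact Nat.card_congr (Equiv.subtypeEquivRight fun f => Iff.rfl))
    have hkc : ∀ c : ℕ, N * c = ∑ p : L × L, (if ⁅p.1, p.2⁆ = 0 then c else 0) := by
      intro c
      rw [← Finset.sum_filter, Finset.sum_const, smul_eq_mul, hNdef, Nat.card_eq_fintype_card,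
        Fintype.card_subtype]
    have hLsq : Nat.card L ^ 2 * D = ∑ _p : L × L, D := by
      rw [Finset.sum_const, smul_eq_mul, Finset.card_univ, Fintype.card_prod,
        Nat.card_eq_fintype_card, sq]
    have side2 : q * T + N * D = N * (q * D) + Nat.card L ^ 2 * D := by
      rw [hT2, Finset.mul_sum, hkc D, hkc (q * D), hLsq, ← Finset.sum_add_distrib,
        ← Finset.sum_add_distrib]
      exact Finset.sum_congr rfl fun p _ => key2 p
    -- cast side2 to ℚ
    have side2q : Q * (T : ℚ) + (N : ℚ) * Dq = (N : ℚ) * Q * Dq + X ^ 2 * Dq := by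
      have h' := congrArg (Nat.cast (R := ℚ)) side2
      rw [hcardL, hcardD] at h'
      push_cast at h'
      rw [hQdef, hDqdef, hXdef, hQdef]
      push_cast
      linear_combination h'
    -- the f = 0 term
    have hK0 : (Nat.card (LinearMap.ker (brktForm
        (0 : Module.Dual F ↥(LieAlgebra.derivedSeries F L 1)))) : ℚ) = X := by
      rw [brktForm_zero, LinearMap.ker_zero, Nat.card_congr (Submodule.topEquiv).toEquiv,
        hcardL, hXdef, hQdef]
      push_cast
      rfl
    have hg0X : Q ^ 3 * (Nat.card {p : L × L // brktForm
        (0 : Module.Dual F ↥(LieAlgebra.derivedSeries F L 1)) p.1 p.2 = 0} : ℚ)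
        = Q ^ 3 * X ^ 2 := by
      have hm := master 0
      rw [hK0] at hm
      linear_combination Q ^ 2 * hm
    -- per nonzero functional bound
    have perf : ∀ f : Module.Dual F ↥(LieAlgebra.derivedSeries F L 1), f ≠ 0 →
        Q ^ 3 * (Nat.card {p : L × L // brktForm f p.1 p.2 = 0} : ℚ)
          ≤ X ^ 2 * (Q - 1) + Q ^ 2 * X ^ 2 := by
      intro f hf
      have hm2 : Q ^ 3 * (Nat.card {p : L × L // brktForm f p.1 p.2 = 0} : ℚ)
          = (Nat.card (LinearMap.ker (brktForm f)) : ℚ) * Q ^ 2 * X * (Q - 1) + Q ^ 2 * X ^ 2 := by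
        linear_combination Q ^ 2 * master f
      nlinarith [hkb f hf, hX0, hQ2,
        mul_nonneg (sub_nonneg.mpr (hkb f hf))
          (mul_nonneg hX0.le (by linarith : (0 : ℚ) ≤ Q - 1))]
    have hTQ : Q ^ 3 * (T : ℚ) = ∑ f : Module.Dual F ↥(LieAlgebra.derivedSeries F L 1),
        Q ^ 3 * (Nat.card {p : L × L // brktForm f p.1 p.2 = 0} : ℚ) := by
      rw [hT1]
      push_cast
      rw [Finset.mul_sum]
    have hcarde : (((Finset.univ.erase
        (0 : Module.Dual F ↥(LieAlgebra.derivedSeries F L 1))).card : ℕ) : ℚ) = Dq - 1 := by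
      rw [Finset.card_erase_of_mem (Finset.mem_univ _), Finset.card_univ,
        ← Nat.card_eq_fintype_card, ← hDdef, Nat.cast_sub hD1, hcastD, Nat.cast_one]
    have sumb : ∑ f ∈ Finset.univ.erase
        (0 : Module.Dual F ↥(LieAlgebra.derivedSeries F L 1)),
        Q ^ 3 * (Nat.card {p : L × L // brktForm f p.1 p.2 = 0} : ℚ)
        ≤ (Dq - 1) * (X ^ 2 * (Q - 1) + Q ^ 2 * X ^ 2) := by
      have h := Finset.sum_le_card_nsmul (Finset.univ.erase 0) _
        (X ^ 2 * (Q - 1) + Q ^ 2 * X ^ 2)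
        (fun f hf => perf f (Finset.ne_of_mem_erase hf))
      rwa [nsmul_eq_mul, hcarde] at h
    have e2 : Q ^ 3 * (T : ℚ)
        ≤ Q ^ 3 * X ^ 2 + (Dq - 1) * (X ^ 2 * (Q - 1) + Q ^ 2 * X ^ 2) := by
      rw [hTQ, ← Finset.add_sum_erase Finset.univ _
        (Finset.mem_univ (0 : Module.Dual F ↥(LieAlgebra.derivedSeries F L 1)))]
      exact add_le_add (le_of_eq hg0X) sumb
    have e1 : Q ^ 3 * (T : ℚ) = Q ^ 2 * ((N : ℚ) * Dq * (Q - 1)) + Q ^ 2 * X ^ 2 * Dq := by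
      linear_combination Q ^ 2 * side2q
    have hQ1 : (1 : ℚ) ≤ Q := by linarith
    have hDqQ2 : Q ^ 2 ≤ Dq := by
      rw [hDqdef]
      exact pow_le_pow_right₀ hQ1 hs2
    have hQ1Dq : Q + 1 ≤ Dq := by nlinarith
    have hfact : (0 : ℚ) ≤ X ^ 2 * (Q - 1) ^ 2 * (Dq - (Q + 1)) :=
      mul_nonneg (mul_nonneg (sq_nonneg X) (sq_nonneg (Q - 1))) (by linarith)
    have hstep : ((N : ℚ) * Q) * (Dq * ((Q - 1) * Q)) ≤ X ^ 2 * (Dq * ((Q - 1) * Q)) := by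
      linarith [e1, e2, hfact]
    have hpos : (0 : ℚ) < Dq * ((Q - 1) * Q) :=
      mul_pos hDq0 (mul_pos (by linarith) hQ0)
    have hNQ : (N : ℚ) * Q ≤ X ^ 2 := le_of_mul_le_mul_right hstep hpos
    rw [hd, div_lt_div_iff₀ hQ0 (by positivity)] at hlow
    linarith
end
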